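/- arXiv:math/0002026 — 8 statements merged into one kernel-verified Lean document; each statement's English description precedes it below -/
import Mathlib

section
/- Let V be an n-dimensional vector space over the finite field F_q, and let φ_0,...,φ_{n-1} be a basis of the dual space V*. For 0 ≤ i ≤ q^n - 1 with base-q expansion i = c_0 + c_1 q + ... + c_{n-1} q^{n-1} (0 ≤ c_j ≤ q-1), define Φ_i = φ_0^{c_0} · φ_1^{c_1} ⋯ φ_{n-1}^{c_{n-1}} as a function V → F_q. Then the q^n functions Φ_i form an F_q-basis of the space of all functions from V to F_q. -/
/-!
The functionals `φ_j` are the coordinates of an isomorphism `V ≃ 𝔽^n`, so it suffices to treat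
functions `𝔽^n → 𝔽`. Every such function is a polynomial function of degree `< q` in each
variable, hence the `q^n` monomials `x^c` with `c : Fin n → Fin q` span a space of dimension
`q^n`, and so form a basis.
-/

open Module

namespace FiniteField

variable (K σ : Type*) [Field K] [Fintype K] [Fintype σ]

theorem span_range_prod_pow_eq_top :
    Submodule.span K (Set.range fun (c : σ → Fin (Fintype.card K)) (x : σ → K) =>
      ∏ j, x j ^ (c j : ℕ)) = ⊤ := by
  rw [eq_top_iff, ← MvPolynomial.map_restrict_dom_evalₗ, MvPolynomial.restrictDegree,
    MvPolynomial.restrictSupport_eq_span, Submodule.map_span, Submodule.span_le]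
  rintro _ ⟨_, ⟨d, hd, rfl⟩, rfl⟩
  have hq : 0 < Fintype.card K := Fintype.card_pos
  refine Submodule.subset_span ⟨fun j => ⟨d j, by have := hd j; omega⟩, ?_⟩
  ext x
  simp [MvPolynomial.eval_monomial, Finsupp.prod_fintype]

noncomputable def basisProdPow [DecidableEq σ] :
    Basis (σ → Fin (Fintype.card K)) K ((σ → K) → K) :=
  basisOfTopLeSpanOfCardEqFinrank _ (span_range_prod_pow_eq_top K σ).ge
    (by simp [Module.finrank_fintype_fun_eq_card])

theorem coe_basisProdPow [DecidableEq σ] :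
    ⇑(basisProdPow K σ) = fun c x => ∏ j, x j ^ (c j : ℕ) := by
  simp [basisProdPow]

end FiniteField

namespace Module.Basis

variable {K V ι : Type*} [Field K] [AddCommGroup V] [Module K V] [FiniteDimensional K V]
  [Fintype ι] [DecidableEq ι]

noncomputable def predualEquivFun (b : Basis ι K (Dual K V)) : V ≃ₗ[K] (ι → K) :=
  (evalEquiv K V).trans b.dualBasis.equivFun

@[simp]
theorem predualEquivFun_apply (b : Basis ι K (Dual K V)) (v : V) (i : ι) :
    b.predualEquivFun v i = b i v := by
  simp [predualEquivFun]

end Module.Basis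

theorem stmt_0_general (𝔽 V : Type*) [Field 𝔽] [Fintype 𝔽] [AddCommGroup V] [Module 𝔽 V]
    [FiniteDimensional 𝔽 V] (n : ℕ)
    (b : Module.Basis (Fin n) 𝔽 (Module.Dual 𝔽 V)) :
    LinearIndependent 𝔽 (fun i : Fin (Fintype.card 𝔽 ^ n) => fun v : V =>
        ∏ j : Fin n, b j v ^ ((i : ℕ) / Fintype.card 𝔽 ^ (j : ℕ) % Fintype.card 𝔽)) ∧
    Submodule.span 𝔽 (Set.range (fun i : Fin (Fintype.card 𝔽 ^ n) => fun v : V =>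
        ∏ j : Fin n, b j v ^ ((i : ℕ) / Fintype.card 𝔽 ^ (j : ℕ) % Fintype.card 𝔽))) = ⊤ := by
  let B := ((FiniteField.basisProdPow 𝔽 (Fin n)).map
    (LinearEquiv.funCongrLeft 𝔽 𝔽 b.predualEquivFun.toEquiv)).reindex finFunctionFinEquiv
  have hB : ⇑B = fun (i : Fin (Fintype.card 𝔽 ^ n)) (v : V) =>
      ∏ j : Fin n, b j v ^ ((i : ℕ) / Fintype.card 𝔽 ^ (j : ℕ) % Fintype.card 𝔽) := by
    ext i v
    simp [B, FiniteField.coe_basisProdPow, LinearEquiv.funCongrLeft_apply,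
      finFunctionFinEquiv_symm_apply_val]
  exact hB ▸ ⟨B.linearIndependent, B.span_eq⟩

/-- digit-product extension of a dual basis gives a basis of Maps(V, F_q). -/
theorem stmt_0 (𝔽 V : Type*) [Field 𝔽] [Fintype 𝔽] [AddCommGroup V] [Module 𝔽 V]
    [FiniteDimensional 𝔽 V] (n : ℕ) (hn : Module.finrank 𝔽 V = n)
    (b : Module.Basis (Fin n) 𝔽 (Module.Dual 𝔽 V)) :
    LinearIndependent 𝔽 (fun i : Fin (Fintype.card 𝔽 ^ n) => fun v : V =>
        ∏ j : Fin n, b j v ^ ((i : ℕ) / Fintype.card 𝔽 ^ (j : ℕ) % Fintype.card 𝔽)) ∧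
    Submodule.span 𝔽 (Set.range (fun i : Fin (Fintype.card 𝔽 ^ n) => fun v : V =>
        ∏ j : Fin n, b j v ^ ((i : ℕ) / Fintype.card 𝔽 ^ (j : ℕ) % Fintype.card 𝔽))) = ⊤ :=
  stmt_0_general 𝔽 V n b
end

section
/- Let F be a field, f ∈ F[T], and D_j the j-th hyperdifferential operator on F[T]. For all n ≥ j ≥ 0 and all g ∈ F[T], the polynomial f^{n-j} divides D_j(f^n · g). -/
open Polynomial

/- Induction on `n` via the Leibniz rule for `f * (f ^ n * g)`: the term in which `f` is not
differentiated gains a factor `f`, and every other term loses at least one order of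
differentiation on `f ^ n * g`. -/
theorem Polynomial.pow_sub_dvd_hasseDeriv_pow_mul {R : Type*} [CommSemiring R] (f g : R[X])
    (n j : ℕ) : f ^ (n - j) ∣ hasseDeriv j (f ^ n * g) := by
  induction n generalizing j g with
  | zero => simp
  | succ n ih =>
    rw [pow_succ', mul_assoc, hasseDeriv_mul]
    refine Finset.dvd_sum fun ⟨a, b⟩ hab => ?_
    rw [Finset.HasAntidiagonal.mem_antidiagonal] at hab
    rcases Nat.eq_zero_or_pos a with rfl | ha
    · obtain rfl : b = j := by simpa using hab
      rw [hasseDeriv_zero, LinearMap.id_apply]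
      calc f ^ (n + 1 - b) ∣ f * f ^ (n - b) := by
            rw [← pow_succ']; exact pow_dvd_pow f (by omega)
        _ ∣ f * hasseDeriv b (f ^ n * g) := mul_dvd_mul_left f (ih g b)
    · calc f ^ (n + 1 - j) ∣ f ^ (n - b) := pow_dvd_pow f (by omega)
        _ ∣ hasseDeriv b (f ^ n * g) := ih g b
        _ ∣ hasseDeriv a f * hasseDeriv b (f ^ n * g) := dvd_mul_left _ _

theorem stmt_5_general (F : Type*) [Field F] (f : Polynomial F) (n j : ℕ)
    (g : Polynomial F) :
    f ^ (n - j) ∣ Polynomial.hasseDeriv j (f ^ n * g) :=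
  pow_sub_dvd_hasseDeriv_pow_mul f g n j

/-- f^(n-j) divides D_j(f^n g) for the Hasse–Schmidt derivatives. -/
theorem stmt_5 (F : Type*) [Field F] (f : Polynomial F) (n j : ℕ) (h : j ≤ n)
    (g : Polynomial F) :
    f ^ (n - j) ∣ Polynomial.hasseDeriv j (f ^ n * g) :=
  stmt_5_general F f n j g
end

section
/- Let F be a field, f ∈ F[T], and D_j the j-th hyperdifferential operator on F[T]. Then D_j(f^j) ≡ (f')^j mod f, where f' is the ordinary derivative of f. -/
/-!
By the Leibniz rule, `D_{j+1}(f · f^j) = ∑_{a+b=j+1} D_a f · D_b (f^j)`. The term `a = 0` is a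
multiple of `f`, and so is every term with `b < j`, since `f ∣ D_b (f^j)` for `b < j` (again by
Leibniz, inductively). Only `a = 1, b = j` survives, so `D_{j+1}(f^{j+1}) ≡ f' · D_j(f^j) mod f`,
and induction on `j` gives `D_j(f^j) ≡ (f')^j mod f`.
-/

open Finset Polynomial

namespace Polynomial

theorem dvd_hasseDeriv_pow_of_lt {R : Type*} [CommSemiring R] (f : R[X]) {j k : ℕ}
    (hkj : k < j) : f ∣ hasseDeriv k (f ^ j) := by
  induction j generalizing k with
  | zero => omega
  | succ j ih =>
    cases k with
    | zero => simpa only [hasseDeriv_zero'] using dvd_pow_self f j.succ_ne_zero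
    | succ k =>
      rw [pow_succ', hasseDeriv_mul, Nat.sum_antidiagonal_succ, hasseDeriv_zero']
      refine dvd_add (dvd_mul_right f _) (dvd_sum fun p hp => dvd_mul_of_dvd_right (ih ?_) _)
      have := mem_antidiagonal.mp hp
      omega

theorem dvd_hasseDeriv_succ_pow_succ_sub {R : Type*} [CommRing R] (f : R[X]) (j : ℕ) :
    f ∣ hasseDeriv (j + 1) (f ^ (j + 1)) - derivative f * hasseDeriv j (f ^ j) := by
  rw [pow_succ', hasseDeriv_mul, Nat.sum_antidiagonal_succ, hasseDeriv_zero',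
    Nat.sum_antidiagonal_eq_sum_range_succ (fun a b => hasseDeriv (a + 1) f * hasseDeriv b (f ^ j)),
    sum_range_succ', zero_add, hasseDeriv_one', Nat.sub_zero, add_sub_assoc, add_sub_cancel_right]
  refine dvd_add (dvd_mul_right f _) (dvd_sum fun k hk => dvd_mul_of_dvd_right ?_ _)
  exact dvd_hasseDeriv_pow_of_lt f (by have := mem_range.mp hk; omega)

end Polynomial

/-- D_j(f^j) ≡ (f')^j mod f for the Hasse–Schmidt derivatives. -/
theorem stmt_6 (F : Type*) [Field F] (f : Polynomial F) (j : ℕ) :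
    f ∣ Polynomial.hasseDeriv j (f ^ j) - (Polynomial.derivative f) ^ j := by
  induction j with
  | zero => simp
  | succ j ih =>
    have h := (dvd_hasseDeriv_succ_pow_succ_sub f j).add (ih.mul_left (derivative f))
    rwa [mul_sub, ← pow_succ', sub_add_sub_cancel] at h
end

section
/- Let A be a commutative algebra over a commutative ring R, S a multiplicative subset of A, and {d_j}_{j≥0} a higher R-derivation on A (d_0 = id, each d_j is R-linear, and d_j(ab) = Σ_{k=0}^j d_k(a) d_{j-k}(b)). Then there is a unique higher R-derivation on the localization S^{-1}A extending {d_j}. -/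
/-!
A family `d : ℕ → A →ₗ[R] A` with `d 0 = id` is a higher derivation exactly when
`a ↦ ∑ j, d j a • X ^ j` is an `R`-algebra homomorphism `A → A⟦X⟧` with constant coefficient the
identity. Composed with `A → S⁻¹A`, this homomorphism sends `s ∈ S` to a power series with unit
constant coefficient, hence to a unit, so it lifts uniquely to `S⁻¹A → (S⁻¹A)⟦X⟧`; the
coefficients of the lift are the extension. Uniqueness holds because two higher derivations of
`S⁻¹A` extending `d` give ring homomorphisms `S⁻¹A → (S⁻¹A)⟦X⟧` agreeing on `A`.
-/

open PowerSeries

structure IsHigherDerivation {R A : Type*} [CommRing R] [CommRing A] [Algebra R A]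
    (d : ℕ → A →ₗ[R] A) : Prop where
  zero_apply : ∀ a, d 0 a = a
  leibniz : ∀ (j : ℕ) (a b : A),
    d j (a * b) = ∑ k ∈ Finset.range (j + 1), d k a * d (j - k) b

namespace HigherDerivation

variable {R A : Type*} [CommRing R] [CommRing A] [Algebra R A]

def series (d : ℕ → A →ₗ[R] A) : A →ₗ[R] A⟦X⟧ where
  toFun a := mk fun j => d j a
  map_add' a b := by ext j; simp
  map_smul' r a := by ext j; simp

@[simp]
theorem coeff_series (d : ℕ → A →ₗ[R] A) (j : ℕ) (a : A) : coeff j (series d a) = d j a :=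
  coeff_mk j fun i => d i a

noncomputable def ofAlgHom (ψ : A →ₐ[R] A⟦X⟧) (j : ℕ) : A →ₗ[R] A :=
  (coeff j).restrictScalars R ∘ₗ ψ.toLinearMap

@[simp]
theorem ofAlgHom_apply (ψ : A →ₐ[R] A⟦X⟧) (j : ℕ) (a : A) : ofAlgHom ψ j a = coeff j (ψ a) :=
  rfl

theorem isHigherDerivation_ofAlgHom (ψ : A →ₐ[R] A⟦X⟧) (hψ : ∀ a, constantCoeff (ψ a) = a) :
    IsHigherDerivation (ofAlgHom ψ) where
  zero_apply a := by rw [ofAlgHom_apply, coeff_zero_eq_constantCoeff_apply, hψ]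
  leibniz j a b := by
    rw [ofAlgHom_apply, map_mul, coeff_mul, Finset.Nat.sum_antidiagonal_eq_sum_range_succ_mk]
    rfl

end HigherDerivation

namespace IsHigherDerivation

open HigherDerivation

variable {R A : Type*} [CommRing R] [CommRing A] [Algebra R A] {d : ℕ → A →ₗ[R] A}

theorem series_mul (hd : IsHigherDerivation d) (a b : A) :
    series d (a * b) = series d a * series d b := by
  ext j
  rw [coeff_mul, Finset.Nat.sum_antidiagonal_eq_sum_range_succ_mk, coeff_series, hd.leibniz]
  simp only [coeff_series]

theorem constantCoeff_series (hd : IsHigherDerivation d) (a : A) :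
    constantCoeff (series d a) = a := by
  rw [← coeff_zero_eq_constantCoeff_apply, coeff_series, hd.zero_apply]

/-- The series of `1` is an idempotent unit. -/
theorem series_one (hd : IsHigherDerivation d) : series d 1 = 1 := by
  have hunit : IsUnit (series d 1) := by
    rw [isUnit_iff_constantCoeff, hd.constantCoeff_series]
    exact isUnit_one
  refine hunit.mul_left_inj.mp ?_
  rw [← hd.series_mul, one_mul, one_mul]

noncomputable def toAlgHom (hd : IsHigherDerivation d) : A →ₐ[R] A⟦X⟧ :=
  AlgHom.ofLinearMap (series d) hd.series_one hd.series_mul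

@[simp]
theorem toAlgHom_apply (hd : IsHigherDerivation d) (a : A) : hd.toAlgHom a = series d a := rfl

end IsHigherDerivation

section Localization

open HigherDerivation

variable {R A L : Type*} [CommRing R] [CommRing A] [CommRing L] [Algebra A L]

namespace IsHigherDerivation

variable [Algebra R A] {d : ℕ → A →ₗ[R] A} (S : Submonoid A) [IsLocalization S L]

theorem isUnit_map_series (hd : IsHigherDerivation d) (s : S) :
    IsUnit (map (algebraMap A L) (series d s)) := by
  rw [isUnit_iff_constantCoeff, ← coeff_zero_eq_constantCoeff_apply, coeff_map,
    coeff_zero_eq_constantCoeff_apply, hd.constantCoeff_series]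
  exact IsLocalization.map_units L s

variable [Algebra R L] [IsScalarTower R A L]

noncomputable def localizationSeries (hd : IsHigherDerivation d) : L →ₐ[R] L⟦X⟧ :=
  IsLocalization.liftAlgHom (M := S)
    (f := (mapAlgHom (IsScalarTower.toAlgHom R A L)).comp hd.toAlgHom) (hd.isUnit_map_series S)

theorem localizationSeries_algebraMap (hd : IsHigherDerivation d) (a : A) :
    hd.localizationSeries S (algebraMap A L a) = map (algebraMap A L) (series d a) :=
  IsLocalization.lift_eq _ a

theorem constantCoeff_localizationSeries (hd : IsHigherDerivation d) (x : L) :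
    constantCoeff (hd.localizationSeries S x) = x := by
  have h : constantCoeff.comp (hd.localizationSeries S).toRingHom = RingHom.id L :=
    IsLocalization.ringHom_ext S <| RingHom.ext fun a => by
      simp [localizationSeries_algebraMap, ← coeff_zero_eq_constantCoeff_apply, hd.zero_apply]
  exact RingHom.congr_fun h x

theorem isHigherDerivation_localization (hd : IsHigherDerivation d) :
    IsHigherDerivation (ofAlgHom (hd.localizationSeries (L := L) S)) :=
  isHigherDerivation_ofAlgHom _ (hd.constantCoeff_localizationSeries S)

theorem localization_algebraMap (hd : IsHigherDerivation d) (j : ℕ) (a : A) :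
    ofAlgHom (hd.localizationSeries S) j (algebraMap A L a) = algebraMap A L (d j a) := by
  rw [ofAlgHom_apply, localizationSeries_algebraMap, coeff_map, coeff_series]

end IsHigherDerivation

/-- The series `L → L⟦X⟧` of `D` and `D'` are ring homomorphisms agreeing on `A`. -/
theorem IsHigherDerivation.ext_localization [Algebra R L] (S : Submonoid A) [IsLocalization S L]
    {D D' : ℕ → L →ₗ[R] L} (hD : IsHigherDerivation D) (hD' : IsHigherDerivation D')
    (h : ∀ j a, D j (algebraMap A L a) = D' j (algebraMap A L a)) : D = D' := by
  have hseries : hD.toAlgHom.toRingHom = hD'.toAlgHom.toRingHom :=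
    IsLocalization.ringHom_ext S <| RingHom.ext fun a => by ext j; simp [h]
  funext j
  ext x
  simpa using congr_arg (coeff j) (RingHom.congr_fun hseries x)

end Localization

/-- a higher R-derivation on a commutative R-algebra A extends uniquely
to any localization of A. -/
theorem stmt_7 (R A : Type*) [CommRing R] [CommRing A] [Algebra R A] (S : Submonoid A)
    (d : ℕ → A →ₗ[R] A) (hd0 : ∀ a, d 0 a = a)
    (hleib : ∀ (j : ℕ) (a b : A),
      d j (a * b) = ∑ k ∈ Finset.range (j + 1), d k a * d (j - k) b) :
    ∃! D : ℕ → Localization S →ₗ[R] Localization S,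
      (∀ x, D 0 x = x) ∧
      (∀ (j : ℕ) (x y : Localization S),
        D j (x * y) = ∑ k ∈ Finset.range (j + 1), D k x * D (j - k) y) ∧
      (∀ (j : ℕ) (a : A),
        D j (algebraMap A (Localization S) a) = algebraMap A (Localization S) (d j a)) := by
  have hd : IsHigherDerivation d := ⟨hd0, hleib⟩
  have hD := hd.isHigherDerivation_localization (L := Localization S) S
  refine ⟨_, ⟨hD.zero_apply, hD.leibniz, hd.localization_algebraMap S⟩, ?_⟩
  rintro D' ⟨hD'0, hD'leib, hD'ext⟩
  refine IsHigherDerivation.ext_localization S ⟨hD'0, hD'leib⟩ hD fun j a => ?_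
  exact (hD'ext j a).trans (hd.localization_algebraMap S j a).symm
end

section
/- Let K be a field containing a subfield F, and L/K a finite separable field extension. Then every higher F-derivation {d_j} on K extends uniquely to a higher F-derivation on L. -/
/-!
A higher derivation `d` on `K` is the same as a ring hom `φ : K →+* L⟦X⟧`, `a ↦ ∑ d_j(a) X^j`,
lifting `algebraMap K L` along the constant coefficient; an extension of `d` to `L` is a ring hom
`Ψ : L →+* L⟦X⟧` extending `φ` and lifting the identity of `L = L⟦X⟧ ⧸ (X)`.
A separable algebraic extension is formally étale and `L⟦X⟧` is `X`-adically complete, so this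
lift exists and is unique; this replaces Hensel's lemma applied to the minimal polynomial of a
primitive element. The extension is `F`-linear because `φ` sends `F` to constant series.
-/

open PowerSeries

namespace PowerSeries

theorem coeff_mul_eq_sum_range {S : Type*} [Semiring S] (j : ℕ) (p q : S⟦X⟧) :
    coeff j (p * q) = ∑ k ∈ Finset.range (j + 1), coeff k p * coeff (j - k) q := by
  rw [coeff_mul, Finset.Nat.sum_antidiagonal_eq_sum_range_succ_mk]

theorem quotient_mk_span_X_eq_iff {S : Type*} [CommRing S] {p q : S⟦X⟧} :
    Ideal.Quotient.mk (Ideal.span {X}) p = Ideal.Quotient.mk (Ideal.span {X}) q ↔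
      constantCoeff p = constantCoeff q := by
  rw [Ideal.Quotient.eq, Ideal.mem_span_singleton, X_dvd_iff, map_sub, sub_eq_zero]

theorem iInf_span_X_pow_eq_bot {S : Type*} [CommRing S] :
    ⨅ i, Ideal.span {(X : S⟦X⟧)} ^ i = ⊥ := by
  simpa only [smul_eq_mul, Ideal.mul_top] using
    (IsAdicComplete.toIsHausdorff (I := Ideal.span {(X : S⟦X⟧)}) (M := S⟦X⟧)).iInf_pow_smul

section FormallyEtale

variable {R A B : Type*} [CommRing R] [CommRing A] [CommRing B] [Algebra R A]

theorem ringHom_ext_of_formallyUnramified [Algebra.FormallyUnramified R A]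
    {Ψ₁ Ψ₂ : A →+* B⟦X⟧} (h : Ψ₁.comp (algebraMap R A) = Ψ₂.comp (algebraMap R A))
    (h0 : constantCoeff.comp Ψ₁ = constantCoeff.comp Ψ₂) : Ψ₁ = Ψ₂ := by
  let _ := (Ψ₂.comp (algebraMap R A)).toAlgebra
  let g₁ : A →ₐ[R] B⟦X⟧ := { Ψ₁ with commutes' := fun r => congr($h r) }
  let g₂ : A →ₐ[R] B⟦X⟧ := { Ψ₂ with commutes' := fun _ => rfl }
  have : g₁ = g₂ := Algebra.FormallyUnramified.ext_of_iInf _ iInf_span_X_pow_eq_bot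
    fun x => quotient_mk_span_X_eq_iff.mpr congr($h0 x)
  exact RingHom.ext fun x => congr($this x)

theorem exists_lift_of_formallySmooth [Algebra.FormallySmooth R A] (φ : R →+* B⟦X⟧)
    (ψ₀ : A →+* B) (h : constantCoeff.comp φ = ψ₀.comp (algebraMap R A)) :
    ∃ Ψ : A →+* B⟦X⟧, Ψ.comp (algebraMap R A) = φ ∧ constantCoeff.comp Ψ = ψ₀ := by
  -- `B⟦X⟧` is an `R`-algebra through `φ`, so `R`-algebra homs out of `A` are the lifts of `φ`
  let _ := φ.toAlgebra
  let f : A →ₐ[R] B⟦X⟧ ⧸ Ideal.span {X} :=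
    { (Ideal.Quotient.mk _).comp (C.comp ψ₀) with
      commutes' := fun r => quotient_mk_span_X_eq_iff.mpr congr($h r).symm }
  obtain ⟨g, hg⟩ := Algebra.FormallySmooth.exists_mkₐ_comp_eq_of_isAdicComplete f
  refine ⟨g, RingHom.ext g.commutes, RingHom.ext fun x => ?_⟩
  simpa [f] using quotient_mk_span_X_eq_iff.mp congr($hg x)

end FormallyEtale

section Leibniz

variable {R S : Type*} [NonAssocSemiring R] [CommRing S] (D : ℕ → R → S)

theorem mk_mul_of_leibniz
    (hmul : ∀ j x y, D j (x * y) = ∑ k ∈ Finset.range (j + 1), D k x * D (j - k) y) (x y : R) :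
    mk (fun j => D j (x * y)) = mk (fun j => D j x) * mk (fun j => D j y) := by
  ext j
  rw [coeff_mul_eq_sum_range]
  simp only [coeff_mk, hmul]

noncomputable def mkRingHom (h1 : D 0 1 = 1) (hadd : ∀ j x y, D j (x + y) = D j x + D j y)
    (hmul : ∀ j x y, D j (x * y) = ∑ k ∈ Finset.range (j + 1), D k x * D (j - k) y) :
    R →+* S⟦X⟧ where
  toFun x := mk fun j => D j x
  map_mul' := mk_mul_of_leibniz D hmul
  map_one' := by
    have hunit : IsUnit (mk fun j => D j 1) :=
      isUnit_iff_constantCoeff.mpr (by simp [← coeff_zero_eq_constantCoeff_apply, h1])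
    have hidem := mk_mul_of_leibniz D hmul 1 1
    rw [mul_one] at hidem
    exact hunit.mul_eq_left.mp hidem.symm
  map_zero' := by
    ext j
    simpa using (AddMonoidHom.mk' (D j) (hadd j)).map_zero
  map_add' x y := by
    ext j
    simp [hadd]

@[simp]
theorem coeff_mkRingHom {h1 hadd hmul} (j : ℕ) (x : R) :
    coeff j (mkRingHom D h1 hadd hmul x) = D j x :=
  coeff_mk j fun j => D j x

end Leibniz

end PowerSeries

theorem stmt_8_general (F K L : Type*) [Field F] [Field K] [Field L]
    [Algebra F K] [Algebra K L] [Algebra F L] [IsScalarTower F K L]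
    [Algebra.IsSeparable K L]
    (d : ℕ → K → K) (hd0 : ∀ a, d 0 a = a)
    (hadd : ∀ (j : ℕ) (a b : K), d j (a + b) = d j a + d j b)
    (hsmul : ∀ (j : ℕ) (c : F) (a : K),
      d j (algebraMap F K c * a) = algebraMap F K c * d j a)
    (hmul : ∀ (j : ℕ) (a b : K),
      d j (a * b) = ∑ k ∈ Finset.range (j + 1), d k a * d (j - k) b) :
    ∃! D : ℕ → L → L,
      (∀ x, D 0 x = x) ∧
      (∀ (j : ℕ) (x y : L), D j (x + y) = D j x + D j y) ∧
      (∀ (j : ℕ) (c : F) (x : L),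
        D j (algebraMap F L c * x) = algebraMap F L c * D j x) ∧
      (∀ (j : ℕ) (x y : L),
        D j (x * y) = ∑ k ∈ Finset.range (j + 1), D k x * D (j - k) y) ∧
      (∀ (j : ℕ) (a : K), D j (algebraMap K L a) = algebraMap K L (d j a)) := by
  have := Algebra.FormallyEtale.of_isSeparable K L
  let φ : K →+* L⟦X⟧ := mkRingHom (fun j a => algebraMap K L (d j a)) (by simp [hd0])
    (by simp [hadd]) (by simp [hmul])
  have hφF (c : F) : φ (algebraMap F K c) = C (algebraMap F L c) := by
    rw [← mul_one (algebraMap F K c), ← mul_one (C _), ← map_one φ]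
    ext j
    rw [coeff_C_mul]
    simp only [φ, coeff_mkRingHom]
    rw [hsmul, map_mul, ← IsScalarTower.algebraMap_apply]
  obtain ⟨Ψ, hΨφ, hΨ0⟩ := exists_lift_of_formallySmooth φ (RingHom.id L)
    (by ext a; simp [φ, ← coeff_zero_eq_constantCoeff_apply, hd0])
  have hΨF (c : F) : Ψ (algebraMap F L c) = C (algebraMap F L c) := by
    rw [← hφF, ← hΨφ, RingHom.comp_apply, ← IsScalarTower.algebraMap_apply]
  refine ⟨fun j x => coeff j (Ψ x), ⟨fun x => ?_, fun j x y => ?_, fun j c x => ?_,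
    fun j x y => ?_, fun j a => ?_⟩, ?_⟩
  · simpa using congr($hΨ0 x)
  · simp
  · simp [hΨF, coeff_C_mul]
  · simp [coeff_mul_eq_sum_range]
  · simp [← RingHom.comp_apply, hΨφ, φ]
  · rintro D ⟨hD0, hDadd, -, hDmul, hDd⟩
    have hD : mkRingHom D (hD0 1) hDadd hDmul = Ψ := by
      refine ringHom_ext_of_formallyUnramified (R := K) ?_ ?_
      · rw [hΨφ]; ext a j; simp [φ, hDd]
      · rw [hΨ0]; ext x; simp [← coeff_zero_eq_constantCoeff_apply, hD0]
    funext j x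
    rw [← hD, coeff_mkRingHom]

/-- a higher F-derivation on K extends uniquely to a finite separable
extension L of K. -/
theorem stmt_8 (F K L : Type*) [Field F] [Field K] [Field L]
    [Algebra F K] [Algebra K L] [Algebra F L] [IsScalarTower F K L]
    [FiniteDimensional K L] [Algebra.IsSeparable K L]
    (d : ℕ → K → K) (hd0 : ∀ a, d 0 a = a)
    (hadd : ∀ (j : ℕ) (a b : K), d j (a + b) = d j a + d j b)
    (hsmul : ∀ (j : ℕ) (c : F) (a : K),
      d j (algebraMap F K c * a) = algebraMap F K c * d j a)
    (hmul : ∀ (j : ℕ) (a b : K),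
      d j (a * b) = ∑ k ∈ Finset.range (j + 1), d k a * d (j - k) b) :
    ∃! D : ℕ → L → L,
      (∀ x, D 0 x = x) ∧
      (∀ (j : ℕ) (x y : L), D j (x + y) = D j x + D j y) ∧
      (∀ (j : ℕ) (c : F) (x : L),
        D j (algebraMap F L c * x) = algebraMap F L c * D j x) ∧
      (∀ (j : ℕ) (x y : L),
        D j (x * y) = ∑ k ∈ Finset.range (j + 1), D k x * D (j - k) y) ∧
      (∀ (j : ℕ) (a : K), D j (algebraMap K L a) = algebraMap K L (d j a)) :=
  stmt_8_general F K L d hd0 hadd hsmul hmul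
end

section
/- For the Carlitz polynomials over F_q[T]: with e_j(x) = ∏_{deg h < j} (x - h) (product over all h ∈ F_q[T] of degree < j, including 0) and D_j = ∏ h over monic h of degree j, one has ord_T(e_j(T^n)) = n + (1 + q + ... + q^{j-1}) - j for all n > j ≥ 1, and hence ord_T(e_j(T^n)) > ord_T(D_j) = 1 + q + ... + q^{j-1}, so E_j(T^n) = e_j(T^n)/D_j ≡ 0 mod T. -/
/-!
Valuations of a product over all `h` with `deg h < j` are computed layer by layer:
`v_p (∏ (g - h)) = ∑_{s ≥ 1} #{h | p ^ s ∣ g - h}`. For `p = X` and `g = X ^ m` with `m ≥ j`,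
`X ^ s ∣ X ^ m - h` (for `s ≤ m`) says that the `s` lowest coefficients of `h` vanish, which
happens for `q ^ (j - s)` of the `h`, so `ord_X e_j(X ^ m) = (1 + q + ⋯ + q ^ (j - 1)) + (m - j)`.
Up to `h ↦ -h`, `D_j` is `e_j(X ^ j)`.

For `e_j(X ^ j) ∣ e_j(g)`: the `h` with `P ∣ g - h` form a fibre of the additive map
`h ↦ h mod P`, so there are equally many for every `g` once `deg P ≤ j` (the fibre is then
nonempty), while for `deg P > j` no `X ^ j - h` is divisible by `P`. Hence
`v_p (e_j(X ^ j)) ≤ v_p (e_j(g))` for every prime `p`, and comparing `ord_X` shows that the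
quotient `e_j(X ^ n) / D_j` vanishes at `0` when `n > j`.
-/

open Polynomial Finset
open scoped Classical

theorem emultiplicity_eq_card_filter_pow_dvd {α : Type*} [Monoid α] {p a : α} {N : ℕ}
    (h : ¬ p ^ (N + 1) ∣ a) : emultiplicity p a = #{s ∈ Icc 1 N | p ^ s ∣ a} := by
  have hlt := emultiplicity_lt_iff_not_dvd.2 h
  obtain ⟨m, hm⟩ := ENat.ne_top_iff_exists.mp hlt.ne_top
  rw [← hm, Nat.cast_lt] at hlt
  have hfilter : ({s ∈ Icc 1 N | p ^ s ∣ a} : Finset ℕ) = Icc 1 m := by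
    ext s
    rw [mem_filter, mem_Icc, mem_Icc, pow_dvd_iff_le_emultiplicity, ← hm, Nat.cast_le]
    omega
  rw [← hm, hfilter, Nat.card_Icc, Nat.add_sub_cancel]

theorem emultiplicity_prod_eq_sum_card {α ι : Type*} [CommMonoidWithZero α] [IsCancelMulZero α]
    [Fintype ι] {p : α} (hp : Prime p) (f : ι → α) {N : ℕ} (h : ∀ i, ¬ p ^ (N + 1) ∣ f i) :
    emultiplicity p (∏ i, f i) = ∑ s ∈ Icc 1 N, #{i | p ^ s ∣ f i} := by
  simp only [Finset.emultiplicity_prod hp, emultiplicity_eq_card_filter_pow_dvd (h _),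
    card_filter]
  push_cast
  exact Finset.sum_comm

theorem Nat.sum_Icc_pow_sub (q : ℕ) {j m : ℕ} (h : j ≤ m) :
    ∑ s ∈ Icc 1 m, q ^ (j - s) = ∑ k ∈ range j, q ^ k + (m - j) := by
  induction m, h using Nat.le_induction with
  | base =>
    rw [← Finset.Ico_add_one_right_eq_Icc, sum_Ico_reflect _ _ le_rfl, range_eq_Ico]
    simp
  | succ m hjm ih =>
    rw [sum_Icc_succ_top (by omega), ih, Nat.sub_eq_zero_of_le (by omega : j ≤ m + 1), pow_zero]
    omega

namespace Polynomial

theorem coe_rootMultiplicity_eq_emultiplicity {R : Type*} [CommRing R] {p : R[X]} (hp : p ≠ 0)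
    (a : R) : (p.rootMultiplicity a : ℕ∞) = emultiplicity (X - C a) p := by
  rw [rootMultiplicity_eq_multiplicity, if_neg hp,
    (finiteMultiplicity_X_sub_C a hp).emultiplicity_eq_multiplicity]

theorem sum_C_mul_X_pow_eq_ofFn {R : Type*} [Semiring R] {n : ℕ} (v : Fin n → R) :
    ∑ i : Fin n, C (v i) * X ^ (i : ℕ) = ofFn n v := by
  simp only [C_mul_X_pow_eq_monomial, ofFn_eq_sum_monomial]

section Ring

variable {R : Type*} [Ring R] {j m : ℕ}

theorem monic_X_pow_sub_ofFn (h : j ≤ m) (c : Fin j → R) : (X ^ m - ofFn j c).Monic :=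
  monic_X_pow_sub ((ofFn_degree_lt c).trans_le (by exact_mod_cast h))

theorem natDegree_X_pow_sub_ofFn [Nontrivial R] (h : j ≤ m) (c : Fin j → R) :
    (X ^ m - ofFn j c).natDegree = m := by
  apply natDegree_eq_of_degree_eq_some
  rw [degree_sub_eq_left_of_degree_lt] <;> rw [degree_X_pow]
  exact (ofFn_degree_lt c).trans_le (by exact_mod_cast h)

end Ring

variable {K : Type*} [Field K]

theorem not_pow_succ_dvd_of_natDegree_le {p f : K[X]} {N : ℕ} (hp : 0 < p.natDegree)
    (hf : f ≠ 0) (hN : f.natDegree ≤ N) : ¬ p ^ (N + 1) ∣ f := by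
  intro hdvd
  have := natDegree_le_of_dvd hdvd hf
  rw [natDegree_pow] at this
  nlinarith

theorem exists_dvd_sub_ofFn {P : K[X]} {j : ℕ} (hP : 0 < P.natDegree) (hPj : P.natDegree ≤ j)
    (g : K[X]) : ∃ c : Fin j → K, P ∣ g - ofFn j c := by
  refine ⟨toFn j (g % P), ?_⟩
  rw [ofFn_comp_toFn_eq_id_of_natDegree_lt ((natDegree_mod_lt g hP.ne').trans_le hPj),
    EuclideanDomain.mod_eq_sub_mul_div, sub_sub_cancel]
  exact dvd_mul_right _ _

variable [Fintype K]

theorem card_X_pow_dvd_ofFn (j s : ℕ) :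
    #{c : Fin j → K | X ^ s ∣ ofFn j c} = Fintype.card K ^ (j - s) := by
  have hfilter : ({c : Fin j → K | X ^ s ∣ ofFn j c} : Finset _) =
      Fintype.piFinset fun i : Fin j => if (i : ℕ) < s then {0} else univ := by
    ext c
    simp only [mem_filter, mem_univ, true_and, Fintype.mem_piFinset, X_pow_dvd_iff]
    constructor
    · intro h i
      split_ifs with hi
      · simpa [ofFn_coeff_eq_val_of_lt c i.isLt] using h i hi
      · exact mem_univ _
    · intro h d hd
      by_cases hdj : d < j
      · have := h ⟨d, hdj⟩
        rw [if_pos hd, mem_singleton] at this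
        rw [ofFn_coeff_eq_val_of_lt c hdj, this]
      · exact ofFn_coeff_eq_zero_of_ge c (not_lt.mp hdj)
  simp only [hfilter, Fintype.card_piFinset, apply_ite card, card_singleton, card_univ]
  rw [prod_ite, prod_const_one, one_mul, prod_const]
  congr 1
  have := card_filter_add_card_filter_not (s := (univ : Finset (Fin j))) (fun i => (i : ℕ) < s)
  rw [Fin.card_filter_val_lt, card_univ, Fintype.card_fin] at this
  omega

theorem card_X_pow_dvd_X_pow_sub_ofFn {s m : ℕ} (hsm : s ≤ m) (j : ℕ) :
    #{c : Fin j → K | X ^ s ∣ X ^ m - ofFn j c} = Fintype.card K ^ (j - s) := by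
  simp only [dvd_sub_right (pow_dvd_pow (X : K[X]) hsm)]
  exact card_X_pow_dvd_ofFn j s

theorem card_dvd_sub_ofFn_eq {P g g' : K[X]} {j : ℕ} (hg : ∃ c, P ∣ g - ofFn j c)
    (hg' : ∃ c, P ∣ g' - ofFn j c) :
    #{c : Fin j → K | P ∣ g - ofFn j c} = #{c : Fin j → K | P ∣ g' - ofFn j c} := by
  let φ := (Ideal.Quotient.mk (Ideal.span {P})).toAddMonoidHom.comp (ofFn j).toAddMonoidHom
  have hφ : ∀ h c, φ c = Ideal.Quotient.mk _ h ↔ P ∣ h - ofFn j c := fun h c => by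
    change Ideal.Quotient.mk _ (ofFn j c) = _ ↔ _
    rw [eq_comm, Ideal.Quotient.eq, Ideal.mem_span_singleton]
  simp only [← hφ] at hg hg' ⊢
  exact AddMonoidHom.card_fiber_eq_of_mem_range φ hg hg'

theorem card_dvd_X_pow_sub_ofFn_le {P : K[X]} (hP : 0 < P.natDegree) (j : ℕ) (g : K[X]) :
    #{c : Fin j → K | P ∣ X ^ j - ofFn j c} ≤ #{c : Fin j → K | P ∣ g - ofFn j c} := by
  by_cases hPj : P.natDegree ≤ j
  · exact (card_dvd_sub_ofFn_eq (exists_dvd_sub_ofFn hP hPj _) (exists_dvd_sub_ofFn hP hPj g)).le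
  · have : ({c : Fin j → K | P ∣ X ^ j - ofFn j c} : Finset _) = ∅ :=
      filter_eq_empty_iff.2 fun c _ hdvd => hPj <| natDegree_X_pow_sub_ofFn le_rfl c ▸
        natDegree_le_of_dvd hdvd (monic_X_pow_sub_ofFn le_rfl c).ne_zero
    simp [this]

/-- Carlitz's `e_j(g) = ∏_{deg h < j} (g - h)`, the polynomials `h` of degree `< j` being
listed by their coefficient vectors. -/
noncomputable def carlitzE (j : ℕ) (g : K[X]) : K[X] :=
  ∏ c : Fin j → K, (g - ofFn j c)

theorem prod_X_pow_add_ofFn (j : ℕ) : ∏ c : Fin j → K, (X ^ j + ofFn j c) = carlitzE j (X ^ j) :=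
  Fintype.prod_equiv (Equiv.neg _) _ _ fun c => by simp [sub_eq_add_neg]

theorem monic_carlitzE_X_pow {j m : ℕ} (h : j ≤ m) : (carlitzE j (X ^ m : K[X])).Monic :=
  monic_prod_of_monic _ _ fun c _ => monic_X_pow_sub_ofFn h c

theorem carlitzE_X_pow_dvd (j : ℕ) (g : K[X]) : carlitzE j (X ^ j) ∣ carlitzE j g := by
  by_cases hg : carlitzE j g = 0
  · rw [hg]
    exact dvd_zero _
  have hfac : ∀ c, g - ofFn j c ≠ 0 := fun c h => hg (prod_eq_zero (mem_univ c) h)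
  rw [UniqueFactorizationMonoid.dvd_iff_emultiplicity_le (monic_carlitzE_X_pow le_rfl).ne_zero]
  intro p hp
  have hp0 : 0 < p.natDegree :=
    natDegree_pos_iff_degree_pos.2 (degree_pos_of_irreducible hp.irreducible)
  set N := max g.natDegree j
  have hD : ∀ c, ¬ p ^ (N + 1) ∣ X ^ j - ofFn j c := fun c =>
    not_pow_succ_dvd_of_natDegree_le hp0 (monic_X_pow_sub_ofFn le_rfl c).ne_zero
      ((natDegree_X_pow_sub_ofFn le_rfl c).trans_le (le_max_right _ _))
  have he : ∀ c, ¬ p ^ (N + 1) ∣ g - ofFn j c := fun c =>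
    not_pow_succ_dvd_of_natDegree_le hp0 (hfac c) ((natDegree_sub_le _ _).trans
      (max_le_max le_rfl (natDegree_le_of_degree_le (ofFn_degree_lt c).le)))
  rw [carlitzE, carlitzE, emultiplicity_prod_eq_sum_card hp _ hD,
    emultiplicity_prod_eq_sum_card hp _ he]
  refine Nat.cast_le.2 (sum_le_sum fun s hs => card_dvd_X_pow_sub_ofFn_le ?_ j g)
  rw [natDegree_pow]
  exact Nat.mul_pos (mem_Icc.1 hs).1 hp0

theorem emultiplicity_X_carlitzE_X_pow {j m : ℕ} (h : j ≤ m) :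
    emultiplicity X (carlitzE j (X ^ m : K[X])) =
      ((∑ s ∈ Icc 1 m, Fintype.card K ^ (j - s) : ℕ) : ℕ∞) := by
  rw [carlitzE, emultiplicity_prod_eq_sum_card prime_X _ fun c =>
    not_pow_succ_dvd_of_natDegree_le (by simp) (monic_X_pow_sub_ofFn h c).ne_zero
      (natDegree_X_pow_sub_ofFn h c).le]
  exact congrArg _ (sum_congr rfl fun s hs => card_X_pow_dvd_X_pow_sub_ofFn (mem_Icc.1 hs).2 j)

theorem rootMultiplicity_zero_carlitzE_X_pow {j m : ℕ} (h : j ≤ m) :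
    (carlitzE j (X ^ m : K[X])).rootMultiplicity 0 =
      ∑ k ∈ range j, Fintype.card K ^ k + (m - j) := by
  have := coe_rootMultiplicity_eq_emultiplicity (monic_carlitzE_X_pow (K := K) h).ne_zero 0
  rw [map_zero, sub_zero, emultiplicity_X_carlitzE_X_pow h, Nat.sum_Icc_pow_sub _ h] at this
  exact_mod_cast this

end Polynomial

theorem stmt_12_general (𝔽 : Type*) [Field 𝔽] [Fintype 𝔽] (j n : ℕ) (hn : j < n) :
    (Polynomial.rootMultiplicity 0
        (∏ c : Fin j → 𝔽, ((Polynomial.X : Polynomial 𝔽) ^ n -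
          ∑ i : Fin j, Polynomial.C (c i) * Polynomial.X ^ (i : ℕ))) =
      n + (∑ k ∈ Finset.range j, Fintype.card 𝔽 ^ k) - j) ∧
    (Polynomial.rootMultiplicity 0
        (∏ c : Fin j → 𝔽, ((Polynomial.X : Polynomial 𝔽) ^ j +
          ∑ i : Fin j, Polynomial.C (c i) * Polynomial.X ^ (i : ℕ))) =
      ∑ k ∈ Finset.range j, Fintype.card 𝔽 ^ k) ∧
    ∃ E : Polynomial 𝔽,
      (∏ c : Fin j → 𝔽, ((Polynomial.X : Polynomial 𝔽) ^ n -
          ∑ i : Fin j, Polynomial.C (c i) * Polynomial.X ^ (i : ℕ))) =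
        (∏ c : Fin j → 𝔽, ((Polynomial.X : Polynomial 𝔽) ^ j +
          ∑ i : Fin j, Polynomial.C (c i) * Polynomial.X ^ (i : ℕ))) * E ∧
      Polynomial.X ∣ E := by
  simp only [sum_C_mul_X_pow_eq_ofFn, prod_X_pow_add_ofFn, ← carlitzE.eq_1,
    rootMultiplicity_zero_carlitzE_X_pow hn.le, rootMultiplicity_zero_carlitzE_X_pow le_rfl]
  refine ⟨by omega, by simp, ?_⟩
  obtain ⟨E, hE⟩ := carlitzE_X_pow_dvd j (X ^ n : 𝔽[X])
  refine ⟨E, hE, ?_⟩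
  have hmul := rootMultiplicity_mul (x := (0 : 𝔽))
    (by rw [← hE]; exact (monic_carlitzE_X_pow hn.le).ne_zero)
  rw [← hE, rootMultiplicity_zero_carlitzE_X_pow hn.le,
    rootMultiplicity_zero_carlitzE_X_pow le_rfl] at hmul
  have hE0 : E.rootMultiplicity 0 ≠ 0 := by omega
  have hXE := pow_rootMultiplicity_dvd E 0
  rw [map_zero, sub_zero] at hXE
  exact (dvd_pow_self X hE0).trans hXE

/-- T-adic valuation of Carlitz objects: for n > j ≥ 1,
ord_T(e_j(T^n)) = n + (1 + q + ... + q^(j-1)) - j, ord_T(D_j) = 1 + q + ... + q^(j-1),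
hence E_j(T^n) = e_j(T^n)/D_j ≡ 0 mod T. Here polynomials of degree < j
(resp. monic of degree j) are parametrized by their coefficient tuples c : Fin j → F_q. -/
theorem stmt_12 (𝔽 : Type*) [Field 𝔽] [Fintype 𝔽] (j n : ℕ) (hj : 1 ≤ j) (hn : j < n) :
    (Polynomial.rootMultiplicity 0
        (∏ c : Fin j → 𝔽, ((Polynomial.X : Polynomial 𝔽) ^ n -
          ∑ i : Fin j, Polynomial.C (c i) * Polynomial.X ^ (i : ℕ))) =
      n + (∑ k ∈ Finset.range j, Fintype.card 𝔽 ^ k) - j) ∧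
    (Polynomial.rootMultiplicity 0
        (∏ c : Fin j → 𝔽, ((Polynomial.X : Polynomial 𝔽) ^ j +
          ∑ i : Fin j, Polynomial.C (c i) * Polynomial.X ^ (i : ℕ))) =
      ∑ k ∈ Finset.range j, Fintype.card 𝔽 ^ k) ∧
    ∃ E : Polynomial 𝔽,
      (∏ c : Fin j → 𝔽, ((Polynomial.X : Polynomial 𝔽) ^ n -
          ∑ i : Fin j, Polynomial.C (c i) * Polynomial.X ^ (i : ℕ))) =
        (∏ c : Fin j → 𝔽, ((Polynomial.X : Polynomial 𝔽) ^ j +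
          ∑ i : Fin j, Polynomial.C (c i) * Polynomial.X ^ (i : ℕ))) * E ∧
      Polynomial.X ∣ E :=
  stmt_12_general 𝔽 j n hn
end

section
/- For integers x, y ≥ 0 and 0 ≤ i ≤ p^n - 1, if x ≡ y mod p^n then the binomial coefficients satisfy C(x, i) ≡ C(y, i) mod p. -/
/-- for i < p^n, the binomial coefficient C(x,i) mod p only depends
on x mod p^n. -/
theorem stmt_14 (p : ℕ) (hp : p.Prime) (n i x y : ℕ) (hi : i < p ^ n)
    (h : x ≡ y [MOD p ^ n]) : Nat.choose x i ≡ Nat.choose y i [MOD p] := by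
  haveI := Fact.mk hp
  have hx := Choose.choose_modEq_choose_mul_prod_range_choose (n := x) (k := i) (p := p) n
  have hy := Choose.choose_modEq_choose_mul_prod_range_choose (n := y) (k := i) (p := p) n
  have hdiv : i / p ^ n = 0 := Nat.div_eq_of_lt hi
  have hprod : ∀ j ∈ Finset.range n, x / p ^ j % p = y / p ^ j % p := by
    intro j hj
    have hjn : j + 1 ≤ n := Finset.mem_range.mp hj
    have hmod : x % p ^ (j + 1) = y % p ^ (j + 1) :=
      Nat.ModEq.of_dvd (pow_dvd_pow p hjn) h
    have e : ∀ z : ℕ, z / p ^ j % p = z % (p ^ j * p) / p ^ j := by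
      intro z; rw [Nat.mod_mul_right_div_self]
    rw [e x, e y, ← pow_succ, hmod]
  have hxy : (∏ j ∈ Finset.range n, Nat.choose (x / p ^ j % p) (i / p ^ j % p)) =
      ∏ j ∈ Finset.range n, Nat.choose (y / p ^ j % p) (i / p ^ j % p) :=
    Finset.prod_congr rfl (fun j hj => by rw [hprod j hj])
  simp only [hdiv, Nat.choose_zero_right, Nat.cast_one, one_mul] at hx hy
  rw [← Int.natCast_modEq_iff]
  calc ((Nat.choose x i : ℤ)) ≡ _ [ZMOD p] := hx
    _ ≡ (Nat.choose y i : ℤ) [ZMOD p] := by rw [hxy]; exact hy.symm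
end

section
/- Let D : F[T] → F[T][[X]] be the Taylor homomorphism D(f)(X) = f(T+X) with coefficients D_j. For any f, π ∈ F[T] and j ≥ 1, the chain-rule identity holds: D_j(f(π)) = Σ_{i=1}^{j} D_{i,π}(f)(π) · Σ_{k_1+...+k_i = j, all k_m ≥ 1} D_{k_1}(π) ⋯ D_{k_i}(π), where D_{i,π}(f) denotes the i-th hyperdifferential operator in the variable of f, evaluated at π. -/
/-!
Let `D(p) = p(T + X) ∈ F[T][X]`, so that `D_j(p)` is the coefficient of `X^j`. Composition
commutes with `D`, so `D(f ∘ π) = f(D π) = f(π + ρ)` with `ρ = D π - π = ∑_{k ≥ 1} D_k(π) X^k`.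
Taylor expanding `f` around `π` gives `f(π + ρ) = ∑_i (D_i f)(π) ρ^i`. As `ρ` has no constant
term, the coefficient of `X^j` in `ρ^i` is the sum over compositions of `j` into `i` positive
parts of `∏ D_{k_m}(π)`, and it vanishes unless `1 ≤ i ≤ j`.
-/

open Polynomial Finset

theorem Finset.Nat.sum_antidiagonalTuple_succ {M : Type*} [AddCommMonoid M] (i j : ℕ)
    (f : (Fin (i + 1) → ℕ) → M) :
    ∑ k ∈ antidiagonalTuple (i + 1) j, f k =
      ∑ ab ∈ antidiagonal j, ∑ x ∈ antidiagonalTuple i ab.2, f (Fin.cons ab.1 x) := by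
  simp only [Finset.sum_eq_multiset_sum, antidiagonalTuple, Multiset.Nat.antidiagonalTuple,
    Multiset.map_coe, Multiset.sum_coe, List.Nat.antidiagonalTuple, List.flatMap_def,
    List.map_flatten, List.sum_flatten, List.map_map, Function.comp_def]
  rfl

namespace Polynomial

variable {R : Type*}

theorem hasseDeriv_map [Semiring R] {S : Type*} [Semiring S] (φ : R →+* S) (k : ℕ)
    (p : R[X]) : hasseDeriv k (p.map φ) = (hasseDeriv k p).map φ := by
  ext n
  simp [hasseDeriv_coeff, coeff_map]

section CommSemiring

variable [CommSemiring R]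

theorem coeff_pow_eq_sum_antidiagonalTuple (p : R[X]) (i j : ℕ) :
    (p ^ i).coeff j = ∑ k ∈ Nat.antidiagonalTuple i j, ∏ m : Fin i, p.coeff (k m) := by
  induction i generalizing j with
  | zero => cases j <;> simp [coeff_one]
  | succ i ih =>
    simp only [pow_succ', coeff_mul, Nat.sum_antidiagonalTuple_succ, ih, mul_sum,
      Fin.prod_univ_succ, Fin.cons_zero, Fin.cons_succ]

theorem coeff_pow_eq_sum_pos_antidiagonalTuple {p : R[X]} (hp : p.coeff 0 = 0) (i j : ℕ) :
    (p ^ i).coeff j =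
      ∑ k ∈ (Nat.antidiagonalTuple i j).filter (fun k => ∀ m, 0 < k m),
        ∏ m : Fin i, p.coeff (k m) := by
  rw [coeff_pow_eq_sum_antidiagonalTuple, sum_filter_of_ne]
  intro k _ hk m
  by_contra! hkm
  exact hk (prod_eq_zero (mem_univ m) (by rw [Nat.le_zero.1 hkm, hp]))

theorem coeff_pow_eq_zero_of_lt {p : R[X]} (hp : p.coeff 0 = 0) {i j : ℕ} (h : j < i) :
    (p ^ i).coeff j = 0 :=
  X_pow_dvd_iff.1 (pow_dvd_pow_of_dvd (X_dvd_iff.2 hp) i) j h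

theorem coeff_comp_eq_sum_Icc (g : R[X]) {ρ : R[X]} (hρ : ρ.coeff 0 = 0) {j : ℕ} (hj : 1 ≤ j) :
    (g.comp ρ).coeff j = ∑ i ∈ Icc 1 j, g.coeff i * (ρ ^ i).coeff j := by
  rw [comp_eq_sum_left, sum_over_range' _ (fun _ => by simp) (g.natDegree + j + 1) (by omega),
    finsetSum_coeff]
  simp only [coeff_C_mul]
  refine (sum_subset (fun i hi => ?_) fun i _ hi => ?_).symm
  · simp only [mem_Icc, mem_range] at hi ⊢
    omega
  · rcases Nat.eq_zero_or_pos i with rfl | hi0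
    · simp [coeff_one, Nat.one_le_iff_ne_zero.1 hj]
    · have hji : j < i := by simp only [mem_Icc] at hi; omega
      rw [coeff_pow_eq_zero_of_lt hρ hji, mul_zero]

/-- The Taylor homomorphism `p(T) ↦ p(T + X)`, the variable `T` living in the coefficients. -/
noncomputable def taylorExpansion (p : R[X]) : R[X][X] :=
  (p.map C).comp (X + C X)

theorem coeff_taylorExpansion (p : R[X]) (j : ℕ) :
    (taylorExpansion p).coeff j = hasseDeriv j p := by
  rw [taylorExpansion, ← taylor_apply, taylor_coeff, hasseDeriv_map, eval_map, eval₂_C_X]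

theorem taylorExpansion_comp (f π : R[X]) :
    taylorExpansion (f.comp π) = (f.map C).comp (taylorExpansion π) := by
  rw [taylorExpansion, taylorExpansion, map_comp, comp_assoc]

theorem coeff_taylor_map_C (f π : R[X]) (i : ℕ) :
    (taylor π (f.map C)).coeff i = (hasseDeriv i f).comp π := by
  rw [taylor_coeff, hasseDeriv_map, eval_map]
  rfl

end CommSemiring

theorem comp_eq_taylor_comp_sub [CommRing R] (p q : R[X]) (r : R) :
    p.comp q = (taylor r p).comp (q - C r) := by
  rw [taylor_apply, comp_assoc, add_comp, X_comp, C_comp, sub_add_cancel]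

end Polynomial

/-- Teichmüller's chain rule for Hasse–Schmidt derivatives:
D_j(f(π)) = Σ_{i=1}^{j} (D_i f)(π) · Σ_{k_1+...+k_i = j, k_m ≥ 1} D_{k_1}(π)⋯D_{k_i}(π). -/
theorem stmt_17 (F : Type*) [Field F] (f π : Polynomial F) (j : ℕ) (hj : 1 ≤ j) :
    Polynomial.hasseDeriv j (f.comp π) =
      ∑ i ∈ Finset.Icc 1 j,
        (Polynomial.hasseDeriv i f).comp π *
          ∑ k ∈ (Finset.Nat.antidiagonalTuple i j).filter (fun k => ∀ m, 0 < k m),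
            ∏ m : Fin i, Polynomial.hasseDeriv (k m) π := by
  set ρ := taylorExpansion π - C π
  have hρ0 : ρ.coeff 0 = 0 := by simp [ρ, coeff_taylorExpansion]
  have hρ (k : ℕ) (hk : 0 < k) : ρ.coeff k = hasseDeriv k π := by
    simp [ρ, coeff_taylorExpansion, coeff_C, hk.ne']
  have hexpand : taylorExpansion (f.comp π) = (taylor π (f.map C)).comp ρ := by
    rw [taylorExpansion_comp, comp_eq_taylor_comp_sub _ _ π]
  rw [← coeff_taylorExpansion, hexpand, coeff_comp_eq_sum_Icc _ hρ0 hj]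
  refine sum_congr rfl fun i _ => ?_
  rw [coeff_taylor_map_C, coeff_pow_eq_sum_pos_antidiagonalTuple hρ0]
  exact congrArg _ <| sum_congr rfl fun k hk =>
    prod_congr rfl fun m _ => hρ _ ((mem_filter.1 hk).2 m)
end
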